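/- Let B satisfy BK = KB* and B*B = 1, and let a,b ∈ C with |a|² - |b|² = 1. Then for g(ψ) = aψ + bBKψ, the quantity Q(ψ)² - |Λ(ψ)|² is invariant: Q(gψ)² - |Λ(gψ)|² = Q(ψ)² - |Λ(ψ)|², where Q(ψ) = ψ*ψ and Λ(ψ) = ψ*(BKψ). -/

import Mathlib

/-!
Write `φ = B K ψ`. Unitarity of `B` gives `φ*φ = ψ*ψ`, and `BK = KB*` together with `BB* = 1`
gives `BK(gψ) = āφ + b̄ψ`. Expanding the sesquilinear forms yields the transformation laws
`Q(gψ) = (|a|² + |b|²) Q + 2 Re(ā b Λ)` and `Λ(gψ) = ā² Λ + 2 ā b̄ Q + b̄² Λ̄`, from which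
`Q(gψ)² - |Λ(gψ)|² = (|a|² - |b|²)² (Q² - |Λ|²)`.
-/

open Matrix

namespace Bogoliubov

variable {n : Type*} [Fintype n]

def Q (ψ : n → ℂ) : ℂ := star ψ ⬝ᵥ ψ

def Λ (B : Matrix n n ℂ) (ψ : n → ℂ) : ℂ := star ψ ⬝ᵥ B *ᵥ star ψ

/-- The transformation `g = a + b B K`, with `K` complex conjugation. -/
def map (B : Matrix n n ℂ) (a b : ℂ) (ψ : n → ℂ) : n → ℂ := a • ψ + b • B *ᵥ star ψ

lemma star_Q (ψ : n → ℂ) : star (Q ψ) = Q ψ := by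
  rw [Q, ← star_dotProduct]

lemma Q_star (ψ : n → ℂ) : Q (star ψ) = Q ψ := by
  rw [Q, Q, star_star, dotProduct_comm]

lemma star_mulVec_star_dotProduct (B : Matrix n n ℂ) (ψ : n → ℂ) :
    star (B *ᵥ star ψ) ⬝ᵥ ψ = star (Λ B ψ) := by
  rw [Λ, star_dotProduct]

variable [DecidableEq n]

lemma Q_mulVec {U : Matrix n n ℂ} (hU : Uᴴ * U = 1) (v : n → ℂ) : Q (U *ᵥ v) = Q v := by
  rw [Q, star_mulVec, dotProduct_mulVec, vecMul_vecMul, hU, vecMul_one, Q]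

variable {B : Matrix n n ℂ}

lemma mulVec_star_map (hBK : ∀ ψ : n → ℂ, B *ᵥ star ψ = star (Bᴴ *ᵥ ψ)) (hB : Bᴴ * B = 1)
    (a b : ℂ) (ψ : n → ℂ) :
    B *ᵥ star (map B a b ψ) = star a • B *ᵥ star ψ + star b • ψ := by
  have hBBH : B * Bᴴ = 1 := mul_eq_one_comm.mp hB
  rw [map, star_add, star_smul, star_smul, hBK ψ, star_star, mulVec_add, mulVec_smul,
    mulVec_smul, mulVec_mulVec, hBBH, one_mulVec, ← hBK ψ]

lemma star_dotProduct_add_mulVec_star (hB : Bᴴ * B = 1) (ψ : n → ℂ) (x y z w : ℂ) :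
    star (x • ψ + y • B *ᵥ star ψ) ⬝ᵥ (z • ψ + w • B *ᵥ star ψ) =
      (star x * z + star y * w) * Q ψ + star x * w * Λ B ψ + star y * z * star (Λ B ψ) := by
  have hφφ : star (B *ᵥ star ψ) ⬝ᵥ B *ᵥ star ψ = Q ψ := (Q_mulVec hB _).trans (Q_star ψ)
  have hψψ : star ψ ⬝ᵥ ψ = Q ψ := rfl
  have hψφ : star ψ ⬝ᵥ B *ᵥ star ψ = Λ B ψ := rfl
  simp only [star_add, star_smul, add_dotProduct, dotProduct_add, smul_dotProduct,
    dotProduct_smul, smul_eq_mul, hφφ, hψψ, hψφ, star_mulVec_star_dotProduct]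
  ring

lemma Q_map (hB : Bᴴ * B = 1) (a b : ℂ) (ψ : n → ℂ) :
    Q (map B a b ψ) =
      (a * star a + b * star b) * Q ψ + star a * b * Λ B ψ + a * star b * star (Λ B ψ) := by
  rw [Q, map, star_dotProduct_add_mulVec_star hB]
  ring

lemma Λ_map (hBK : ∀ ψ : n → ℂ, B *ᵥ star ψ = star (Bᴴ *ᵥ ψ)) (hB : Bᴴ * B = 1)
    (a b : ℂ) (ψ : n → ℂ) :
    Λ B (map B a b ψ) =
      star a ^ 2 * Λ B ψ + 2 * star a * star b * Q ψ + star b ^ 2 * star (Λ B ψ) := by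
  rw [Λ, mulVec_star_map hBK hB, add_comm, map, star_dotProduct_add_mulVec_star hB]
  ring

lemma ofReal_norm_sq (z : ℂ) : ((‖z‖ : ℝ) : ℂ) ^ 2 = z * star z :=
  (Complex.mul_conj' z).symm

theorem Q_map_sq_sub_norm_Λ_map_sq (hBK : ∀ ψ : n → ℂ, B *ᵥ star ψ = star (Bᴴ *ᵥ ψ))
    (hB : Bᴴ * B = 1) {a b : ℂ} (hab : ‖a‖ ^ 2 - ‖b‖ ^ 2 = 1) (ψ : n → ℂ) :
    Q (map B a b ψ) ^ 2 - ((‖Λ B (map B a b ψ)‖ : ℝ) : ℂ) ^ 2 =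
      Q ψ ^ 2 - ((‖Λ B ψ‖ : ℝ) : ℂ) ^ 2 := by
  have hab' : a * star a - b * star b = 1 := by
    rw [← ofReal_norm_sq, ← ofReal_norm_sq]
    exact_mod_cast hab
  rw [ofReal_norm_sq, ofReal_norm_sq, Q_map hB, Λ_map hBK hB]
  simp only [star_add, star_mul', star_pow, star_star, star_ofNat, star_Q]
  linear_combination (a * star a - b * star b + 1) * (Q ψ ^ 2 - Λ B ψ * star (Λ B ψ)) * hab'

end Bogoliubov

open Bogoliubov in
/-- Invariance of Q² - |Λ|² under the Bogoliubov transformation g = a + bBK. -/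
theorem stmt_6 (N : ℕ) (B : Matrix (Fin N) (Fin N) ℂ)
    (hBK : ∀ ψ : Fin N → ℂ,
      B.mulVec (fun i => (starRingEnd ℂ) (ψ i)) =
        fun i => (starRingEnd ℂ) (Bᴴ.mulVec ψ i))
    (hB : Bᴴ * B = 1)
    (a b : ℂ) (hab : ‖a‖ ^ 2 - ‖b‖ ^ 2 = 1) (ψ : Fin N → ℂ) :
    (star (a • ψ + b • B.mulVec (fun i => (starRingEnd ℂ) (ψ i))) ⬝ᵥ
        (a • ψ + b • B.mulVec (fun i => (starRingEnd ℂ) (ψ i)))) ^ 2 -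
      ((‖star (a • ψ + b • B.mulVec (fun i => (starRingEnd ℂ) (ψ i))) ⬝ᵥ
        B.mulVec (fun i => (starRingEnd ℂ)
          ((a • ψ + b • B.mulVec (fun j => (starRingEnd ℂ) (ψ j))) i))‖ : ℝ) : ℂ) ^ 2 =
    (star ψ ⬝ᵥ ψ) ^ 2 -
      ((‖star ψ ⬝ᵥ B.mulVec (fun i => (starRingEnd ℂ) (ψ i))‖ : ℝ) : ℂ) ^ 2 :=
  Q_map_sq_sub_norm_Λ_map_sq hBK hB hab ψ
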